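/- arXiv:1202.5569 — 2 statements merged into one kernel-verified Lean document; each statement's English description precedes it below -/
import Mathlib

section
/- Let F = G □ H be the Cartesian product of two finite, simple, connected, unweighted, undirected graphs G and H. Then the cover time of F satisfies COV[F] ≥ max{ (1 + δ_G/Δ_H)·COV[H], (1 + δ_H/Δ_G)·COV[G] }, where δ_Γ and Δ_Γ denote the minimum and maximum degree of a graph Γ. -/
open Finset Filter Classical
open scoped ENNReal

noncomputable section

variable {V : Type*} [Fintype V] [DecidableEq V]

/-- Degree of a vertex in a simple graph. -/
def gdeg (G : SimpleGraph V) (u : V) : ℕ :=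
  (Finset.univ.filter (fun v => G.Adj u v)).card

/-- Transition probabilities of the simple random walk on `G`. -/
def srw (G : SimpleGraph V) (u v : V) : ℝ :=
  if G.Adj u v then ((gdeg G u : ℝ))⁻¹ else 0

/-- Probability weight of a trajectory under the transition kernel `P`. -/
def stepWeight (P : V → V → ℝ) {t : ℕ} (f : Fin (t + 1) → V) : ℝ :=
  ∏ i : Fin t, P (f i.castSucc) (f i.succ)

/-- Probability that the `t`-step trajectory of the chain `P` started at `u`
satisfies the predicate `A`. -/
def eventProb (P : V → V → ℝ) (u : V) (t : ℕ) (A : (Fin (t + 1) → V) → Prop) : ℝ :=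
  ∑ f : Fin (t + 1) → V, if f 0 = u ∧ A f then stepWeight P f else 0

/-- Expected hitting time `H[u,v]`, via `E[T] = ∑_t Pr(T > t)`. -/
def hitTime (P : V → V → ℝ) (u v : V) : ℝ≥0∞ :=
  ∑' t : ℕ, ENNReal.ofReal (eventProb P u t (fun f => ∀ i, f i ≠ v))

/-- Expected cover time starting from `u`. -/
def coverTimeFrom (P : V → V → ℝ) (u : V) : ℝ≥0∞ :=
  ∑' t : ℕ, ENNReal.ofReal (eventProb P u t (fun f => ∃ v, ∀ i, f i ≠ v))

/-- The cover time `COV`: maximum over starting vertices of the expected cover time. -/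
def coverTime (P : V → V → ℝ) : ℝ≥0∞ := ⨆ u, coverTimeFrom P u

/-- Stationary probability of `v` for the simple random walk: `d(v)/(2|E|)`. -/
def statPi (G : SimpleGraph V) (v : V) : ℝ := (gdeg G v : ℝ) / (∑ u, (gdeg G u : ℝ))

/-- Number of visits to `w` in a trajectory. -/
def visits {t : ℕ} (f : Fin (t + 1) → V) (w : V) : ℕ :=
  (Finset.univ.filter (fun i => f i = w)).card

/-- The blanket-cover time `BCOV[G]`. -/
def blanketCoverTime (G : SimpleGraph V) : ℝ≥0∞ :=
  ⨆ u, ∑' t : ℕ, ENNReal.ofReal (eventProb (srw G) u t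
    (fun f => ∃ w, (visits f w : ℝ≥0∞) < ENNReal.ofReal (statPi G w) * coverTime (srw G)))

/-- Minimum degree. -/
def minDeg (G : SimpleGraph V) : ℕ := sInf (Set.range (gdeg G))

/-- Maximum degree. -/
def maxDeg (G : SimpleGraph V) : ℕ := Finset.univ.sup (gdeg G)

/-- Number of edges (by the handshaking lemma). -/
def edgeCount (G : SimpleGraph V) : ℕ := (∑ v, gdeg G v) / 2

/-- Diameter. -/
def gdiam (G : SimpleGraph V) : ℕ := Finset.univ.sup (fun p : V × V => G.dist p.1 p.2)

/-- Effective resistance between `u` and `v`, all edges having unit resistance: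
the reciprocal of the effective conductance, the latter given by the Dirichlet
variational principle. -/
def effRes (G : SimpleGraph V) (u v : V) : ℝ :=
  (sInf {e : ℝ | ∃ f : V → ℝ, f u = 1 ∧ f v = 0 ∧
      e = (∑ x, ∑ y, if G.Adj x y then (f x - f y) ^ 2 else 0) / 2})⁻¹

/-- Maximum effective resistance over pairs of vertices. -/
def Rmax (G : SimpleGraph V) : ℝ := sSup {r : ℝ | ∃ u v, r = effRes G u v}

end

/-
Seen through its `H`-coordinate, the walk on `G □ H` is a lazy walk on `H`: from `(x, y)` it
makes a uniform `H`-step with probability `deg y / (deg x + deg y)` and otherwise stays in the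
`G`-fibre of `y`. Let `m` be the least expected time, over that fibre, for the `H`-coordinate to
cover a set `L ∌ y`, attained at `x₀`. Looking one step ahead from `(x₀, y)`, with `A = deg x₀`,
`B = deg y` and `c = 1 + δ_G/Δ_H ≤ 1 + A/B`, and assuming inductively that from every `H`-neighbour
`z` the product walk needs at least `c · E_z` steps, where `E_z` is the corresponding time for the
walk on `H`, gives `m ≥ 1 + (A m + c ∑_{z ∼ y} E_z) / (A + B)`, which rearranges to
`m ≥ c (1 + ∑_{z ∼ y} E_z / B)`. The right-hand side is `c` times the one-step recursion for the
cover time of `L ∪ {y}` from `y` in `H`. To make the induction well founded it runs over a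
truncated cover time of `H`; the second bound follows from `G □ H ≃g H □ G`.
-/

noncomputable section

open SimpleGraph

section Chain

variable {V : Type*} {P : V → V → ℝ}

lemma stepWeight_nonneg (hP : ∀ u v, 0 ≤ P u v) {t : ℕ} (f : Fin (t + 1) → V) :
    0 ≤ stepWeight P f :=
  prod_nonneg fun _ _ => hP _ _

lemma stepWeight_cons (P : V → V → ℝ) {t : ℕ} (v : V) (g : Fin (t + 1) → V) :
    stepWeight P (Fin.cons v g : Fin (t + 2) → V) = P v (g 0) * stepWeight P g := by
  rw [stepWeight, Fin.prod_univ_succ]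
  rfl

variable [Fintype V] [DecidableEq V]

lemma eventProb_nonneg (hP : ∀ u v, 0 ≤ P u v) (u : V) (t : ℕ)
    (A : (Fin (t + 1) → V) → Prop) : 0 ≤ eventProb P u t A :=
  sum_nonneg fun f _ => by split_ifs <;> first | exact stepWeight_nonneg hP f | exact le_rfl

lemma eventProb_mono (hP : ∀ u v, 0 ≤ P u v) (u : V) {t : ℕ}
    {A A' : (Fin (t + 1) → V) → Prop} (h : ∀ f, A f → A' f) :
    eventProb P u t A ≤ eventProb P u t A' :=
  sum_le_sum fun f _ => by
    split_ifs with hA hA'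
    · exact le_rfl
    · exact absurd ⟨hA.1, h f hA.2⟩ hA'
    · exact stepWeight_nonneg hP f
    · exact le_rfl

lemma eventProb_succ (P : V → V → ℝ) (u : V) (t : ℕ) (A : (Fin (t + 2) → V) → Prop) :
    eventProb P u (t + 1) A = ∑ v, P u v * eventProb P v t (fun g => A (Fin.cons u g)) := by
  have hcons : ∀ p : V × (Fin (t + 1) → V),
      (Fin.consEquiv fun _ => V) p = Fin.cons p.1 p.2 := fun _ => rfl
  unfold eventProb
  rw [← (Fin.consEquiv fun _ => V).sum_comp, Fintype.sum_prod_type, sum_comm]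
  simp only [hcons, Fin.cons_zero, stepWeight_cons, mul_sum, mul_ite, mul_zero, ite_and,
    sum_ite_eq', mem_univ, if_true]
  rw [sum_comm]
  simp only [sum_ite_eq, mem_univ, if_true]

variable {W : Type*}

def missProb (P : V → V → ℝ) (ϕ : V → W) (L : Finset W) (u : V) (t : ℕ) : ℝ :=
  eventProb P u t fun f => ∃ w ∈ L, ∀ i, ϕ (f i) ≠ w

/-- Expected number of steps until the walk from `u`, seen through `ϕ`, has visited all of `L`,
written as the tail sum `E[τ] = ∑ₜ P(τ > t)`. -/
def coverTimeOn (P : V → V → ℝ) (ϕ : V → W) (L : Finset W) (u : V) : ℝ≥0∞ :=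
  ∑' t, ENNReal.ofReal (missProb P ϕ L u t)

def partialCoverTimeOn (P : V → V → ℝ) (ϕ : V → W) (L : Finset W) (u : V) (T : ℕ) : ℝ≥0∞ :=
  ∑ t ∈ range T, ENNReal.ofReal (missProb P ϕ L u t)

variable {ϕ : V → W} {L : Finset W} {u : V}

lemma coverTimeOn_eq_iSup : coverTimeOn P ϕ L u = ⨆ T, partialCoverTimeOn P ϕ L u T :=
  ENNReal.tsum_eq_iSup_nat

lemma coverTimeFrom_eq_coverTimeOn_univ (P : V → V → ℝ) (u : V) :
    coverTimeFrom P u = coverTimeOn P id univ u := by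
  simp [coverTimeFrom, coverTimeOn, missProb]

lemma coverTimeOn_le_coverTimeFrom (hP : ∀ u v, 0 ≤ P u v) (hϕ : Function.Surjective ϕ) :
    coverTimeOn P ϕ L u ≤ coverTimeFrom P u :=
  ENNReal.tsum_le_tsum fun _ => ENNReal.ofReal_le_ofReal <|
    eventProb_mono hP u fun _ ⟨w, _, hw⟩ =>
      let ⟨v, hv⟩ := hϕ w
      ⟨v, fun i hi => hw i (by rw [hi, hv])⟩

variable [DecidableEq W]

lemma missProb_zero (P : V → V → ℝ) (h : (L.erase (ϕ u)).Nonempty) :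
    missProb P ϕ L u 0 = 1 := by
  obtain ⟨w, hw⟩ := h
  obtain ⟨hwu, hwL⟩ := mem_erase.1 hw
  rw [missProb, eventProb, ← (Equiv.funUnique (Fin 1) V).symm.sum_comp, Fintype.sum_eq_single u]
  · rw [if_pos ⟨rfl, w, hwL, fun _ => hwu.symm⟩]
    exact Fin.prod_univ_zero _
  · exact fun v hv => if_neg fun h => hv h.1

lemma missProb_of_erase_eq_empty (P : V → V → ℝ) (h : L.erase (ϕ u) = ∅) (t : ℕ) :
    missProb P ϕ L u t = 0 :=
  sum_eq_zero fun f _ => if_neg fun ⟨h0, w, hw, hmiss⟩ => by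
    have : w ∈ L.erase (ϕ u) := mem_erase.2 ⟨fun hu => hmiss 0 (by rw [h0, hu]), hw⟩
    simp [h] at this

lemma missProb_erase_self (P : V → V → ℝ) (t : ℕ) :
    missProb P ϕ (L.erase (ϕ u)) u t = missProb P ϕ L u t := by
  refine sum_congr rfl fun f _ => ?_
  congr 1
  exact propext <| and_congr_right fun h0 =>
    ⟨fun ⟨w, hw, hf⟩ => ⟨w, mem_of_mem_erase hw, hf⟩,
      fun ⟨w, hw, hf⟩ => ⟨w, mem_erase.2 ⟨fun hwu => hf 0 (by rw [h0, hwu]), hw⟩, hf⟩⟩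

lemma missProb_succ (P : V → V → ℝ) (t : ℕ) :
    missProb P ϕ L u (t + 1) = ∑ v, P u v * missProb P ϕ (L.erase (ϕ u)) v t := by
  rw [missProb, eventProb_succ]
  refine sum_congr rfl fun v _ => ?_
  congr 2
  ext g
  simp only [Fin.forall_fin_succ, Fin.cons_zero, Fin.cons_succ, mem_erase]
  exact ⟨fun ⟨w, hL, hu, hg⟩ => ⟨w, ⟨Ne.symm hu, hL⟩, hg⟩,
    fun ⟨w, ⟨hu, hL⟩, hg⟩ => ⟨w, hL, Ne.symm hu, hg⟩⟩

lemma ofReal_missProb_succ (hP : ∀ u v, 0 ≤ P u v) (t : ℕ) :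
    ENNReal.ofReal (missProb P ϕ L u (t + 1))
      = ∑ v, ENNReal.ofReal (P u v) * ENNReal.ofReal (missProb P ϕ (L.erase (ϕ u)) v t) := by
  have hmiss : ∀ v, 0 ≤ missProb P ϕ (L.erase (ϕ u)) v t := fun v => eventProb_nonneg hP _ _ _
  rw [missProb_succ, ENNReal.ofReal_sum_of_nonneg fun v _ => mul_nonneg (hP u v) (hmiss v)]
  exact sum_congr rfl fun v _ => ENNReal.ofReal_mul (hP u v)

lemma coverTimeOn_eq_one_add (hP : ∀ u v, 0 ≤ P u v) (h : (L.erase (ϕ u)).Nonempty) :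
    coverTimeOn P ϕ L u
      = 1 + ∑ v, ENNReal.ofReal (P u v) * coverTimeOn P ϕ (L.erase (ϕ u)) v := by
  rw [coverTimeOn, tsum_eq_zero_add' ENNReal.summable, missProb_zero P h, ENNReal.ofReal_one]
  simp only [ofReal_missProb_succ hP]
  rw [Summable.tsum_finsetSum fun _ _ => ENNReal.summable]
  simp only [ENNReal.tsum_mul_left, coverTimeOn]

lemma coverTimeOn_erase_self (P : V → V → ℝ) :
    coverTimeOn P ϕ (L.erase (ϕ u)) u = coverTimeOn P ϕ L u := by
  simp only [coverTimeOn, missProb_erase_self]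

lemma partialCoverTimeOn_succ (hP : ∀ u v, 0 ≤ P u v) (h : (L.erase (ϕ u)).Nonempty) (T : ℕ) :
    partialCoverTimeOn P ϕ L u (T + 1)
      = 1 + ∑ v, ENNReal.ofReal (P u v) * partialCoverTimeOn P ϕ (L.erase (ϕ u)) v T := by
  simp only [partialCoverTimeOn, sum_range_succ', ofReal_missProb_succ hP, missProb_zero P h,
    ENNReal.ofReal_one, mul_sum]
  rw [add_comm, sum_comm]

lemma partialCoverTimeOn_of_erase_eq_empty (h : L.erase (ϕ u) = ∅) (T : ℕ) :
    partialCoverTimeOn P ϕ L u T = 0 := by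
  simp [partialCoverTimeOn, missProb_of_erase_eq_empty P h]

end Chain

section Transport

variable {V V' : Type*} [Fintype V] [DecidableEq V] [Fintype V'] [DecidableEq V']
  {P : V → V → ℝ} {P' : V' → V' → ℝ}

lemma coverTimeFrom_equiv (e : V ≃ V') (he : ∀ u v, P' (e u) (e v) = P u v) (u : V) :
    coverTimeFrom P' (e u) = coverTimeFrom P u := by
  refine tsum_congr fun t => congrArg ENNReal.ofReal ?_
  refine (Fintype.sum_equiv (Equiv.piCongrRight fun _ => e) _ _ fun f => ?_).symm
  simp [stepWeight, he, e.exists_congr_left, e.eq_symm_apply]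

lemma coverTime_equiv (e : V ≃ V') (he : ∀ u v, P' (e u) (e v) = P u v) :
    coverTime P' = coverTime P :=
  (e.iSup_congr fun u => coverTimeFrom_equiv e he u).symm

end Transport

section Graph

variable {V : Type*} [Fintype V]

lemma srw_nonneg (G : SimpleGraph V) (u v : V) : 0 ≤ srw G u v := by
  unfold srw
  split_ifs <;> positivity

lemma gdeg_eq_degree (G : SimpleGraph V) (u : V) : gdeg G u = G.degree u := by
  rw [gdeg, ← card_neighborFinset_eq_degree, neighborFinset_eq_filter]

lemma sum_srw_mul (G : SimpleGraph V) (u : V) (f : V → ℝ≥0∞) :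
    ∑ v, ENNReal.ofReal (srw G u v) * f v = (gdeg G u : ℝ≥0∞)⁻¹ * ∑ v ∈ G.neighborFinset u, f v := by
  rw [mul_sum, neighborFinset_eq_filter, sum_filter]
  refine sum_congr rfl fun v _ => ?_
  unfold srw
  split_ifs with h
  · have hpos : (0 : ℝ) < gdeg G u := by
      rw [gdeg_eq_degree]
      exact_mod_cast h.degree_pos_left
    rw [ENNReal.ofReal_inv_of_pos hpos, ENNReal.ofReal_natCast]
  · simp

end Graph

section BoxProd

variable {Vg Vh : Type*} [Fintype Vg] [Fintype Vh] (G : SimpleGraph Vg) (H : SimpleGraph Vh)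

lemma gdeg_boxProd (p : Vg × Vh) : gdeg (G □ H) p = gdeg G p.1 + gdeg H p.2 := by
  simp only [gdeg_eq_degree, degree_boxProd]

lemma sum_srw_boxProd_mul (p : Vg × Vh) (f : Vg × Vh → ℝ≥0∞) :
    ∑ q, ENNReal.ofReal (srw (G □ H) p q) * f q
      = ((gdeg G p.1 : ℝ≥0∞) + gdeg H p.2)⁻¹ *
          (∑ b ∈ G.neighborFinset p.1, f (b, p.2) + ∑ z ∈ H.neighborFinset p.2, f (p.1, z)) := by
  rw [sum_srw_mul, gdeg_boxProd, Nat.cast_add, neighborFinset_boxProd, sum_disjUnion, sum_product, sum_product]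
  simp

lemma srw_boxProd_swap (p q : Vg × Vh) : srw (H □ G) p.swap q.swap = srw (G □ H) p q := by
  simp only [srw, boxProd_adj, gdeg_boxProd, Prod.fst_swap, Prod.snd_swap, or_comm, add_comm]

lemma one_add_minDeg_div_maxDeg_le (x : Vg) (y : Vh) :
    1 + (minDeg G : ℝ≥0∞) / maxDeg H ≤ 1 + (gdeg G x : ℝ≥0∞) / gdeg H y := by
  gcongr
  · exact Nat.sInf_le ⟨x, rfl⟩
  · exact le_sup (mem_univ y)

variable [DecidableEq Vg] [DecidableEq Vh]

lemma coverTime_boxProd_comm : coverTime (srw (H □ G)) = coverTime (srw (G □ H)) :=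
  coverTime_equiv (Equiv.prodComm Vg Vh) (srw_boxProd_swap G H)

end BoxProd

lemma ENNReal.mul_one_add_inv_mul_le {A B c S m : ℝ≥0∞} (hA : A ≠ ⊤) (hB₀ : B ≠ 0) (hB : B ≠ ⊤)
    (hc : c ≤ 1 + A / B) (hm : 1 + (A + B)⁻¹ * (A * m + c * S) ≤ m) :
    c * (1 + B⁻¹ * S) ≤ m := by
  rcases eq_or_ne m ⊤ with rfl | hm_top
  · exact le_top
  have hAB₀ : A + B ≠ 0 := by simp [hB₀]
  have hAB : A + B ≠ ⊤ := ENNReal.add_ne_top.2 ⟨hA, hB⟩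
  have h₁ : A * m + ((A + B) + c * S) ≤ A * m + B * m :=
    calc A * m + ((A + B) + c * S) = (A + B) * (1 + (A + B)⁻¹ * (A * m + c * S)) := by
          rw [mul_add, mul_one, ← mul_assoc, ENNReal.mul_inv_cancel hAB₀ hAB, one_mul]; ring
      _ ≤ (A + B) * m := by gcongr
      _ = A * m + B * m := add_mul _ _ _
  have h₂ : (A + B) + c * S ≤ B * m :=
    (ENNReal.add_le_add_iff_left (ENNReal.mul_ne_top hA hm_top)).1 h₁
  calc c * (1 + B⁻¹ * S) = c + c * (B⁻¹ * S) := by ring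
    _ ≤ 1 + A / B + c * (B⁻¹ * S) := by gcongr
    _ = B⁻¹ * ((A + B) + c * S) := by
      rw [ENNReal.div_eq_inv_mul, mul_add, mul_add, ENNReal.inv_mul_cancel hB₀ hB]; ring
    _ ≤ B⁻¹ * (B * m) := by gcongr
    _ = m := by rw [← mul_assoc, ENNReal.inv_mul_cancel hB₀ hB, one_mul]

section Slowdown

variable {Vg Vh : Type*} [Fintype Vg] [DecidableEq Vg] [Fintype Vh] [DecidableEq Vh]

lemma mul_partialCoverTimeOn_le_coverTimeOn_boxProd (G : SimpleGraph Vg) {H : SimpleGraph Vh}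
    (hH : H.Connected) (T : ℕ) (L : Finset Vh) (y : Vh) (x : Vg) :
    (1 + (minDeg G : ℝ≥0∞) / maxDeg H) * partialCoverTimeOn (srw H) id L y T
      ≤ coverTimeOn (srw (G □ H)) Prod.snd L (x, y) := by
  induction T generalizing L y x with
  | zero => simp [partialCoverTimeOn]
  | succ T ih =>
    set c : ℝ≥0∞ := 1 + (minDeg G : ℝ≥0∞) / maxDeg H
    rcases (L.erase y).eq_empty_or_nonempty with hL | hL
    · rw [partialCoverTimeOn_of_erase_eq_empty hL, mul_zero]
      exact zero_le
    set L' := L.erase y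
    have : Nonempty Vg := ⟨x⟩
    obtain ⟨x₀, hx₀⟩ := Finite.exists_min fun x' => coverTimeOn (srw (G □ H)) Prod.snd L' (x', y)
    set m := coverTimeOn (srw (G □ H)) Prod.snd L' (x₀, y)
    have hdeg : gdeg H y ≠ 0 := by
      obtain ⟨w, hw⟩ := hL
      rw [gdeg_eq_degree]
      exact ((hH.preconnected y w).degree_pos_left (mem_erase.1 hw).1.symm).ne'
    have key : 1 + ((gdeg G x₀ : ℝ≥0∞) + gdeg H y)⁻¹ * (gdeg G x₀ * m +
        c * ∑ z ∈ H.neighborFinset y, partialCoverTimeOn (srw H) id L' z T) ≤ m :=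
      calc _ = 1 + ((gdeg G x₀ : ℝ≥0∞) + gdeg H y)⁻¹ * (∑ _b ∈ G.neighborFinset x₀, m +
              ∑ z ∈ H.neighborFinset y, c * partialCoverTimeOn (srw H) id L' z T) := by
            rw [sum_const, card_neighborFinset_eq_degree, ← gdeg_eq_degree, nsmul_eq_mul, mul_sum]
        _ ≤ 1 + ((gdeg G x₀ : ℝ≥0∞) + gdeg H y)⁻¹ *
              (∑ b ∈ G.neighborFinset x₀, coverTimeOn (srw (G □ H)) Prod.snd L' (b, y) +
                ∑ z ∈ H.neighborFinset y, coverTimeOn (srw (G □ H)) Prod.snd L' (x₀, z)) := by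
            gcongr with b _ z _
            exacts [hx₀ b, ih L' z x₀]
        _ = m := by
            rw [← sum_srw_boxProd_mul G H (x₀, y), ← coverTimeOn_eq_one_add (srw_nonneg _) hL]
            exact (coverTimeOn_erase_self _).symm
    rw [← coverTimeOn_erase_self, partialCoverTimeOn_succ (srw_nonneg H) hL, sum_srw_mul]
    refine (ENNReal.mul_one_add_inv_mul_le (ENNReal.natCast_ne_top _) (by exact_mod_cast hdeg)
      (ENNReal.natCast_ne_top _) (one_add_minDeg_div_maxDeg_le G H x₀ y) ?_).trans (hx₀ x)
    exact key

lemma mul_coverTime_le_coverTime_boxProd (G : SimpleGraph Vg) [Nonempty Vg] {H : SimpleGraph Vh}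
    (hH : H.Connected) :
    (1 + (minDeg G : ℝ≥0∞) / maxDeg H) * coverTime (srw H) ≤ coverTime (srw (G □ H)) := by
  obtain ⟨x⟩ := ‹Nonempty Vg›
  rw [coverTime, ENNReal.mul_iSup]
  refine iSup_le fun y => ?_
  calc _ = ⨆ T, (1 + (minDeg G : ℝ≥0∞) / maxDeg H) * partialCoverTimeOn (srw H) id univ y T := by
        rw [coverTimeFrom_eq_coverTimeOn_univ, coverTimeOn_eq_iSup, ENNReal.mul_iSup]
    _ ≤ coverTimeOn (srw (G □ H)) Prod.snd univ (x, y) :=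
        iSup_le fun T => mul_partialCoverTimeOn_le_coverTimeOn_boxProd G hH T univ y x
    _ ≤ coverTimeFrom (srw (G □ H)) (x, y) :=
        coverTimeOn_le_coverTimeFrom (srw_nonneg _) Prod.snd_surjective
    _ ≤ coverTime (srw (G □ H)) := le_iSup (coverTimeFrom _) _

end Slowdown

end

/-- Let `F = G □ H` be the Cartesian product of two finite, simple,
connected, unweighted, undirected graphs `G` and `H`.  Then
`COV[F] ≥ max{(1 + δ_G/Δ_H)·COV[H], (1 + δ_H/Δ_G)·COV[G]}`. -/
theorem coverTime_boxProd_lower_bound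
    {Vg Vh : Type*} [Fintype Vg] [DecidableEq Vg] [Fintype Vh] [DecidableEq Vh]
    (G : SimpleGraph Vg) (H : SimpleGraph Vh)
    (hG : G.Connected) (hH : H.Connected) :
    max ((1 + (minDeg G : ℝ≥0∞) / (maxDeg H : ℝ≥0∞)) * coverTime (srw H))
        ((1 + (minDeg H : ℝ≥0∞) / (maxDeg G : ℝ≥0∞)) * coverTime (srw G))
      ≤ coverTime (srw (G.boxProd H)) := by
  have : Nonempty Vg := hG.nonempty
  have : Nonempty Vh := hH.nonempty
  refine max_le (mul_coverTime_le_coverTime_boxProd G hH) ?_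
  rw [← coverTime_boxProd_comm G H]
  exact mul_coverTime_le_coverTime_boxProd H hG
end

section
/- Let G = (V,E,c) be a finite connected weighted graph with positive edge weights, let V_B ⊂ V be a set of boundary nodes and V_I = V ∖ V_B the internal nodes. Then every function f : V → ℝ that is harmonic at every internal node attains its minimum and its maximum at boundary nodes: there exist b, B ∈ V_B such that f(b) ≤ f(v) ≤ f(B) for every v ∈ V. -/
open Finset Classical

noncomputable section

variable {V : Type*} [Fintype V] [DecidableEq V]

/-- Transition probability of the weighted random walk on the weighted graph `(G, c)`:
`P_{u,v} = c(u,v)/c(u)`. -/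
def wP (G : SimpleGraph V) (c : V → V → ℝ) (u v : V) : ℝ :=
  (if G.Adj u v then c u v else 0) / (∑ w, if G.Adj u w then c u w else 0)

/-- A function `f : V → ℝ` is harmonic at `u` if `f(u) = ∑_v P_{u,v}·f(v)`. -/
def HarmonicAt (G : SimpleGraph V) (c : V → V → ℝ) (f : V → ℝ) (u : V) : Prop :=
  f u = ∑ v, wP G c u v * f v

end

section Aux

variable {V : Type*} [Fintype V] [DecidableEq V]

/-- If the graph is connected and there are at least two vertices, every vertex has a
positive-weight degree sum. -/
lemma denom_pos (G : SimpleGraph V) (c : V → V → ℝ)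
    (hpos : ∀ u v, G.Adj u v → 0 < c u v) (hconn : G.Connected)
    (u : V) (hcard : ∃ v : V, v ≠ u) :
    0 < ∑ w, if G.Adj u w then c u w else 0 := by
  obtain ⟨v, hv⟩ := hcard
  obtain ⟨w⟩ := hconn.preconnected u v
  have hadj : ∃ y, G.Adj u y := by
    cases w with
    | nil => exact absurd rfl (Ne.symm hv)
    | cons h _ => exact ⟨_, h⟩
  obtain ⟨y, hy⟩ := hadj
  refine Finset.sum_pos' (fun i _ => ?_) ⟨y, Finset.mem_univ y, ?_⟩
  · split
    · exact (hpos _ _ (by assumption)).le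
    · exact le_rfl
  · simpa [hy] using hpos _ _ hy

lemma exists_max_boundary (G : SimpleGraph V) (c : V → V → ℝ)
    (hpos : ∀ u v, G.Adj u v → 0 < c u v) (hconn : G.Connected)
    (VB : Set V) (hVB : VB ⊂ Set.univ) (hne : VB.Nonempty)
    (f : V → ℝ) (hf : ∀ u ∉ VB, HarmonicAt G c f u) :
    ∃ B ∈ VB, ∀ v, f v ≤ f B := by
  obtain ⟨x0, -, hx0⟩ := Set.exists_of_ssubset hVB
  obtain ⟨b0, hb0⟩ := hne
  have hcard : ∀ u : V, ∃ v, v ≠ u := by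
    intro u
    by_cases h : u = x0
    · exact ⟨b0, by rintro rfl; exact hx0 (h ▸ hb0)⟩
    · exact ⟨x0, fun hh => h hh.symm⟩
  -- step lemma
  have step : ∀ u, u ∉ VB → (∀ v, f v ≤ f u) → ∀ y, G.Adj u y → f y = f u := by
    intro u hu hmax y hy
    have hD := denom_pos G c hpos hconn u (hcard u)
    have hsum1 : ∑ v, wP G c u v = 1 := by
      unfold wP
      rw [← Finset.sum_div, div_self (ne_of_gt hD)]
    have hnn : ∀ v, 0 ≤ wP G c u v := by
      intro v
      unfold wP
      apply div_nonneg _ hD.le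
      split
      · exact (hpos _ _ (by assumption)).le
      · exact le_rfl
    have hzero : ∑ v, wP G c u v * (f u - f v) = 0 := by
      have hharm := hf u hu
      unfold HarmonicAt at hharm
      have hexp : ∑ v, wP G c u v * (f u - f v)
          = (∑ v, wP G c u v) * f u - ∑ v, wP G c u v * f v := by
        rw [Finset.sum_mul, ← Finset.sum_sub_distrib]
        congr 1; ext v; ring
      rw [hexp, hsum1, one_mul, ← hharm]
      ring
    have hterm : ∀ v ∈ Finset.univ, wP G c u v * (f u - f v) = 0 :=
      (Finset.sum_eq_zero_iff_of_nonneg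
        (fun v _ => mul_nonneg (hnn v) (sub_nonneg.mpr (hmax v)))).mp hzero
    have hwy : 0 < wP G c u y := by
      unfold wP
      apply div_pos _ hD
      simpa [hy] using hpos _ _ hy
    have := hterm y (Finset.mem_univ y)
    rcases mul_eq_zero.mp this with h | h
    · exact absurd h (ne_of_gt hwy)
    · linarith [sub_eq_zero.mp h]
  -- walk induction
  have key : ∀ {a b : V}, G.Walk a b → b ∈ VB → (∀ v, f v ≤ f a) →
      ∃ B ∈ VB, ∀ v, f v ≤ f B := by
    intro a b w
    induction w with
    | nil => exact fun hb ha => ⟨_, hb, ha⟩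
    | @cons a b d h p ih =>
      intro hd ha
      by_cases haB : a ∈ VB
      · exact ⟨a, haB, ha⟩
      · have hb : f b = f a := step a haB ha b h
        exact ih hd (fun v => hb ▸ ha v)
  -- take global max
  obtain ⟨x, -, hx⟩ := Finset.exists_max_image Finset.univ f ⟨b0, Finset.mem_univ b0⟩
  obtain ⟨w⟩ := hconn.preconnected x b0
  exact key w hb0 (fun v => hx v (Finset.mem_univ v))

end Aux

/-- (Maximum principle.)  Let `G = (V,E,c)` be a finite connected weighted
graph with positive edge weights, `V_B ⊂ V` a set of boundary nodes.  Every function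
`f : V → ℝ` harmonic at every internal node attains its minimum and maximum on the
boundary: there are `b, B ∈ V_B` with `f(b) ≤ f(v) ≤ f(B)` for every `v`. -/
theorem harmonic_min_max_on_boundary
    {V : Type*} [Fintype V] [DecidableEq V]
    (G : SimpleGraph V) (c : V → V → ℝ)
    (hsymm : ∀ u v, c u v = c v u)
    (hpos : ∀ u v, G.Adj u v → 0 < c u v)
    (hconn : G.Connected)
    (VB : Set V) (hVB : VB ⊂ Set.univ) (hne : VB.Nonempty)
    (f : V → ℝ)
    (hf : ∀ u ∉ VB, HarmonicAt G c f u) :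
    ∃ b ∈ VB, ∃ B ∈ VB, ∀ v, f b ≤ f v ∧ f v ≤ f B := by
  obtain ⟨B, hB, hBmax⟩ := exists_max_boundary G c hpos hconn VB hVB hne f hf
  have hf' : ∀ u ∉ VB, HarmonicAt G c (fun v => -f v) u := by
    intro u hu
    have := hf u hu
    rw [HarmonicAt] at this ⊢
    simp only [mul_neg, Finset.sum_neg_distrib, neg_inj]
    exact this
  obtain ⟨b, hb, hbmax⟩ := exists_max_boundary G c hpos hconn VB hVB hne _ hf'
  exact ⟨b, hb, B, hB, fun v => ⟨by have := hbmax v; simpa using this, hBmax v⟩⟩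
end
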